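/- Let A ∈ ℝ^{n×n} be symmetric with largest eigenvalue α₁, let g ∈ ℝ^n be nonzero, Δ > 0, and q(s) = gᵀs + (1/2)sᵀAs. Suppose (λ_opt, s_opt) satisfies the TRS optimality conditions with ‖s_opt‖ = Δ. Let k ≥ 0 and let s_k be a global minimizer of q over {s ∈ K_k(g,A) : ‖s‖ ≤ Δ} with ‖s_k‖ = Δ. Then for every nonzero s̃ ∈ K_k(g,A), 0 ≤ q(s_k) − q(s_opt) ≤ 2·(α₁ + λ_opt)·‖s̃ − s_opt‖². -/

import Mathlib

open Matrix
open scoped InnerProductSpace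

noncomputable section

/-- Euclidean 2-norm of a finitely indexed real vector. -/
def euclidNorm {ι : Type*} [Fintype ι] (v : ι → ℝ) : ℝ := ‖(WithLp.equiv 2 (ι → ℝ)).symm v‖

/-- The Krylov subspace `K_k(g,A) = span{g, Ag, …, A^k g}`. -/
def krylov {n : ℕ} (A : Matrix (Fin n) (Fin n) ℝ) (g : Fin n → ℝ) (k : ℕ) :
    Submodule ℝ (Fin n → ℝ) :=
  Submodule.span ℝ {v | ∃ i : ℕ, i ≤ k ∧ v = (A ^ i).mulVec g}

-- auxiliary lemmas

lemma my_inner_eq {n : ℕ} (a b : Fin n → ℝ) :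
    ⟪(WithLp.equiv 2 (Fin n → ℝ)).symm a, (WithLp.equiv 2 (Fin n → ℝ)).symm b⟫_ℝ = a ⬝ᵥ b := by
  simp [PiLp.inner_apply, dotProduct, mul_comm]

lemma my_enorm_sq {n : ℕ} (v : Fin n → ℝ) : euclidNorm v ^ 2 = v ⬝ᵥ v := by
  rw [euclidNorm, ← real_inner_self_eq_norm_sq, my_inner_eq]

lemma my_enorm_nonneg {n : ℕ} (v : Fin n → ℝ) : 0 ≤ euclidNorm v := norm_nonneg _

lemma my_enorm_smul {n : ℕ} (c : ℝ) (v : Fin n → ℝ) : euclidNorm (c • v) = |c| * euclidNorm v := by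
  rw [euclidNorm, euclidNorm, WithLp.equiv_symm_apply, WithLp.toLp_smul, norm_smul, Real.norm_eq_abs]

lemma my_enorm_pos {n : ℕ} {v : Fin n → ℝ} (hv : v ≠ 0) : 0 < euclidNorm v := by
  rw [euclidNorm, norm_pos_iff]
  intro h
  exact hv (by simpa using congrArg (WithLp.equiv 2 (Fin n → ℝ)) h)

lemma my_enorm_triangle {n : ℕ} (a b : Fin n → ℝ) : euclidNorm (a + b) ≤ euclidNorm a + euclidNorm b := by
  rw [euclidNorm, euclidNorm, euclidNorm, WithLp.equiv_symm_apply, WithLp.toLp_add]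
  exact norm_add_le _ _

lemma my_enorm_neg {n : ℕ} (a : Fin n → ℝ) : euclidNorm (-a) = euclidNorm a := by
  rw [euclidNorm, euclidNorm, WithLp.equiv_symm_apply, WithLp.toLp_neg, norm_neg]

lemma my_abs_enorm_sub {n : ℕ} (a b : Fin n → ℝ) : |euclidNorm a - euclidNorm b| ≤ euclidNorm (a - b) := by
  rw [euclidNorm, euclidNorm, euclidNorm, WithLp.equiv_symm_apply, WithLp.toLp_sub]
  exact abs_norm_sub_norm_le _ _

lemma my_symmdot {n : ℕ} {A : Matrix (Fin n) (Fin n) ℝ} (hA : A.IsSymm) (v w : Fin n → ℝ) :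
    v ⬝ᵥ A.mulVec w = w ⬝ᵥ A.mulVec v := by
  rw [Matrix.dotProduct_mulVec, ← Matrix.mulVec_transpose, hA.eq, dotProduct_comm]

lemma my_rayleigh_le {n : ℕ} (A : Matrix (Fin n) (Fin n) ℝ) (hA : A.IsSymm) (α₁ : ℝ)
    (hup : ∀ (μ : ℝ) (v : Fin n → ℝ), v ≠ 0 → A.mulVec v = μ • v → μ ≤ α₁)
    (v : Fin n → ℝ) : v ⬝ᵥ A.mulVec v ≤ α₁ * (v ⬝ᵥ v) := by
  have hH : A.IsHermitian := by
    rw [Matrix.IsHermitian, Matrix.conjTranspose]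
    ext i j; simpa using congrFun (congrFun hA.eq i) j
  set b := hH.eigenvectorBasis with hb
  have key : ∀ i, A.mulVec (b i) = hH.eigenvalues i • (b i) :=
    fun i => hH.mulVec_eigenvectorBasis i
  have hev : ∀ i, hH.eigenvalues i ≤ α₁ := by
    intro i
    refine hup _ _ ?_ (key i)
    have := b.orthonormal.ne_zero i
    intro h
    apply this
    ext j
    exact congrFun h j
  set x : EuclideanSpace ℝ (Fin n) := (WithLp.equiv 2 (Fin n → ℝ)).symm v with hx
  set y : EuclideanSpace ℝ (Fin n) := (WithLp.equiv 2 (Fin n → ℝ)).symm (A.mulVec v) with hy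
  have e1 : v ⬝ᵥ A.mulVec v = ⟪x, y⟫_ℝ := (my_inner_eq v (A.mulVec v)).symm
  have e2 : v ⬝ᵥ v = ⟪x, x⟫_ℝ := (my_inner_eq v v).symm
  have hbx : ∀ i, ⟪(b i : EuclideanSpace ℝ (Fin n)), y⟫_ℝ =
      hH.eigenvalues i * ⟪(b i : EuclideanSpace ℝ (Fin n)), x⟫_ℝ := by
    intro i
    have h1 : ⟪(b i : EuclideanSpace ℝ (Fin n)), y⟫_ℝ = (b i : Fin n → ℝ) ⬝ᵥ A.mulVec v := by
      have := my_inner_eq (n := n) (b i) (A.mulVec v)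
      simpa [hy] using this
    have h2 : ⟪(b i : EuclideanSpace ℝ (Fin n)), x⟫_ℝ = (b i : Fin n → ℝ) ⬝ᵥ v := by
      have := my_inner_eq (n := n) (b i) v
      simpa [hx] using this
    rw [h1, h2, my_symmdot hA, key i, dotProduct_smul, smul_eq_mul,
      dotProduct_comm]
  have s1 := b.sum_inner_mul_inner x y
  have s2 := b.sum_inner_mul_inner x x
  have hsym : ∀ i, ⟪x, (b i : EuclideanSpace ℝ (Fin n))⟫_ℝ =
      ⟪(b i : EuclideanSpace ℝ (Fin n)), x⟫_ℝ := fun i => real_inner_comm _ _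
  rw [e1, e2, ← s1, ← s2]
  have hle : ∀ i ∈ Finset.univ, ⟪x, b i⟫_ℝ * ⟪b i, y⟫_ℝ ≤
      α₁ * (⟪x, b i⟫_ℝ * ⟪b i, x⟫_ℝ) := by
    intro i _
    rw [hbx i, hsym i]
    have hsq : 0 ≤ ⟪(b i : EuclideanSpace ℝ (Fin n)), x⟫_ℝ * ⟪(b i : EuclideanSpace ℝ (Fin n)), x⟫_ℝ := mul_self_nonneg _
    nlinarith [hev i]
  calc ∑ i, ⟪x, b i⟫_ℝ * ⟪b i, y⟫_ℝ ≤ ∑ i, α₁ * (⟪x, b i⟫_ℝ * ⟪b i, x⟫_ℝ) :=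
        Finset.sum_le_sum hle
    _ = α₁ * ∑ i, ⟪x, b i⟫_ℝ * ⟪b i, x⟫_ℝ := by rw [Finset.mul_sum]

/-- If `(λ_opt, s_opt)` satisfies the TRS optimality conditions with `‖s_opt‖ = Δ` and `s_k`
is a global minimizer of `q` over `{s ∈ K_k(g,A) : ‖s‖ ≤ Δ}` with `‖s_k‖ = Δ`, then for
every nonzero `s̃ ∈ K_k(g,A)`,
`0 ≤ q(s_k) − q(s_opt) ≤ 2 (α₁ + λ_opt) ‖s̃ − s_opt‖²`. -/
theorem stmt_13 {n : ℕ} (A : Matrix (Fin n) (Fin n) ℝ) (hA : A.IsSymm)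
    (α₁ : ℝ)
    (hα₁ : (∃ v : Fin n → ℝ, v ≠ 0 ∧ A.mulVec v = α₁ • v) ∧
      ∀ (μ : ℝ) (v : Fin n → ℝ), v ≠ 0 → A.mulVec v = μ • v → μ ≤ α₁)
    (g : Fin n → ℝ) (hg : g ≠ 0) (Δ : ℝ) (hΔ : 0 < Δ)
    (q : (Fin n → ℝ) → ℝ)
    (hq : ∀ s, q s = g ⬝ᵥ s + (1 / 2) * (s ⬝ᵥ A.mulVec s))
    (lamopt : ℝ) (sopt : Fin n → ℝ)
    (h1 : euclidNorm sopt = Δ) (h2 : 0 ≤ lamopt)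
    (h3 : (A + lamopt • (1 : Matrix (Fin n) (Fin n) ℝ)).mulVec sopt = -g)
    (h4 : lamopt * (Δ - euclidNorm sopt) = 0)
    (h5 : (A + lamopt • (1 : Matrix (Fin n) (Fin n) ℝ)).PosSemidef)
    (k : ℕ) (sk : Fin n → ℝ)
    (hskmem : sk ∈ krylov A g k) (hsknorm : euclidNorm sk = Δ)
    (hskmin : ∀ s ∈ krylov A g k, euclidNorm s ≤ Δ → q sk ≤ q s)
    (st : Fin n → ℝ) (hstmem : st ∈ krylov A g k) (hst : st ≠ 0) :
    0 ≤ q sk - q sopt ∧ q sk - q sopt ≤ 2 * (α₁ + lamopt) * euclidNorm (st - sopt) ^ 2 := by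
  set M : Matrix (Fin n) (Fin n) ℝ := A + lamopt • (1 : Matrix (Fin n) (Fin n) ℝ) with hM
  have hMv : ∀ v, M.mulVec v = A.mulVec v + lamopt • v := by
    intro v
    rw [hM, Matrix.add_mulVec, Matrix.smul_mulVec, Matrix.one_mulVec]
  have hMpsd : ∀ v : Fin n → ℝ, 0 ≤ v ⬝ᵥ M.mulVec v := by
    intro v
    have := h5.dotProduct_mulVec_nonneg v
    simpa using this
  -- quadratic identity
  have hg' : g = -(M.mulVec sopt) := by rw [h3, neg_neg]
  have hid : ∀ s : Fin n → ℝ, q s - q sopt =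
      (1/2) * ((s - sopt) ⬝ᵥ M.mulVec (s - sopt))
      - (lamopt/2) * ((s ⬝ᵥ s) - (sopt ⬝ᵥ sopt)) := by
    intro s
    rw [hq, hq, hg']
    rw [hMv, hMv]
    have hsub : A.mulVec (s - sopt) = A.mulVec s - A.mulVec sopt := Matrix.mulVec_sub A s sopt
    rw [hsub]
    have hsym1 : sopt ⬝ᵥ A.mulVec s = s ⬝ᵥ A.mulVec sopt := my_symmdot hA sopt s
    simp only [sub_dotProduct, dotProduct_sub, dotProduct_add,
      add_dotProduct, neg_dotProduct, dotProduct_neg,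
      smul_dotProduct, dotProduct_smul, smul_eq_mul]
    rw [hsym1]
    have hc1 : sopt ⬝ᵥ s = s ⬝ᵥ sopt := dotProduct_comm sopt s
    rw [hc1, dotProduct_comm (A.mulVec sopt) s, dotProduct_comm (A.mulVec sopt) sopt]
    ring
  have hskd : sk ⬝ᵥ sk = sopt ⬝ᵥ sopt := by
    rw [← my_enorm_sq, ← my_enorm_sq, hsknorm, h1]
  -- lower bound
  have hlow : 0 ≤ q sk - q sopt := by
    rw [hid sk, hskd]
    simp only [sub_self, mul_zero, sub_zero]
    have := hMpsd (sk - sopt)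
    linarith
  refine ⟨hlow, ?_⟩
  -- α₁ + lamopt ≥ 0
  have halam : 0 ≤ α₁ + lamopt := by
    obtain ⟨v, hv0, hveig⟩ := hα₁.1
    have h := hMpsd v
    rw [hMv, hveig] at h
    have hvv : 0 < v ⬝ᵥ v := by
      have h0 : v ⬝ᵥ v ≠ 0 := fun hc => hv0 (dotProduct_self_eq_zero.mp hc)
      have h1' : 0 ≤ v ⬝ᵥ v := by
        rw [← my_enorm_sq]; positivity
      exact lt_of_le_of_ne h1' (Ne.symm h0)
    simp only [dotProduct_add, dotProduct_smul, smul_eq_mul] at h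
    nlinarith
  -- scaled vector
  set t : ℝ := euclidNorm st with ht
  have ht0 : 0 < t := my_enorm_pos hst
  set c : ℝ := Δ / t with hc
  have hc0 : 0 < c := div_pos hΔ ht0
  set sh : Fin n → ℝ := c • st with hsh
  have hshmem : sh ∈ krylov A g k := Submodule.smul_mem _ c hstmem
  have hshnorm : euclidNorm sh = Δ := by
    rw [hsh, my_enorm_smul, abs_of_pos hc0, hc, div_mul_cancel₀]
    exact ne_of_gt ht0
  have hqsk : q sk ≤ q sh := hskmin sh hshmem (le_of_eq hshnorm)
  have hshd : sh ⬝ᵥ sh = sopt ⬝ᵥ sopt := by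
    rw [← my_enorm_sq, ← my_enorm_sq, hshnorm, h1]
  -- key distance bound
  have hdist : euclidNorm (sh - sopt) ≤ 2 * euclidNorm (st - sopt) := by
    have htri : euclidNorm (sh - sopt) ≤ euclidNorm (sh - st) + euclidNorm (st - sopt) := by
      have : sh - sopt = (sh - st) + (st - sopt) := by ring
      rw [this]; exact my_enorm_triangle _ _
    have hshst : euclidNorm (sh - st) = |Δ - t| := by
      have : sh - st = (c - 1) • st := by rw [hsh]; module
      have hct : (c - 1) * t = Δ - t := by
        rw [hc]; field_simp
      rw [this, my_enorm_smul, ← ht]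
      calc |c - 1| * t = |(c - 1) * t| := by rw [abs_mul, abs_of_pos ht0]
        _ = |Δ - t| := by rw [hct]
    have hrev : |Δ - t| ≤ euclidNorm (st - sopt) := by
      have := my_abs_enorm_sub sopt st
      rw [h1, ← ht] at this
      calc |Δ - t| ≤ euclidNorm (sopt - st) := this
        _ = euclidNorm (st - sopt) := by rw [← my_enorm_neg (sopt - st)]; congr 1; ring
    linarith
  -- upper bound on q sh - q sopt
  have hup : q sh - q sopt ≤ (1/2) * (α₁ + lamopt) * euclidNorm (sh - sopt) ^ 2 := by
    rw [hid sh, hshd]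
    simp only [sub_self, mul_zero, sub_zero]
    set w : Fin n → ℝ := sh - sopt with hw
    have hray := my_rayleigh_le A hA α₁ hα₁.2 w
    have hMw : w ⬝ᵥ M.mulVec w = w ⬝ᵥ A.mulVec w + lamopt * (w ⬝ᵥ w) := by
      rw [hMv]
      simp [dotProduct_add, dotProduct_smul]
    rw [hMw, ← my_enorm_sq, my_enorm_sq]
    nlinarith [my_enorm_sq w, sq_nonneg (euclidNorm w)]
  have hsq : euclidNorm (sh - sopt) ^ 2 ≤ 4 * euclidNorm (st - sopt) ^ 2 := by
    have h0 : 0 ≤ euclidNorm (sh - sopt) := my_enorm_nonneg _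
    nlinarith [my_enorm_nonneg (st - sopt)]
  calc q sk - q sopt ≤ q sh - q sopt := by linarith
    _ ≤ (1/2) * (α₁ + lamopt) * euclidNorm (sh - sopt) ^ 2 := hup
    _ ≤ (1/2) * (α₁ + lamopt) * (4 * euclidNorm (st - sopt) ^ 2) := by nlinarith
    _ = 2 * (α₁ + lamopt) * euclidNorm (st - sopt) ^ 2 := by ring
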